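/- Let G be a (possibly infinite) d-regular graph with nonbacktracking operator B on directed edges. Suppose θ with |θ| > √(d−1) is an ℓ²-eigenvalue of B with unit eigenvector φ, and suppose G = T^∞G₀ for a finite graph G₀ with vertex set V₀. Then φ vanishes on every directed edge not supported on V₀ that points towards V₀, and consequently θ is an eigenvalue of the submatrix B₀ of B indexed by directed edges with both endpoints in V₀, with eigenvector the restriction φ₀ of φ to those edges. -/

import Mathlib

/-!
On an edge `(x, parent x)` of the tree part pointing towards `V₀`, the eigenvalue equation reads
`θ φ(e) = ∑ φ(e')` over the `d - 1` edges entering `x` from its children. Iterating it `k` times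
writes `θᵏ φ(e)` as a sum of `φ` over `(d - 1)ᵏ` distinct edges, so Cauchy–Schwarz gives
`θ²ᵏ φ(e)² ≤ (d - 1)ᵏ ‖φ‖²`, and `θ² > d - 1` forces `φ(e) = 0`. Hence the edges entering `V₀`
from the trees drop out of the eigenvalue equation on `V₀`. If `φ` also vanished on the edges
inside `V₀`, induction on the distance to `V₀` would kill it on the edges pointing away from `V₀`
as well, contradicting `‖φ‖ = 1`.
-/

noncomputable section

/-- Vertices of the infinite tree extension `T^∞ G₀`. -/
abbrev TInfVert (d : ℕ) (V₀ : Type) [Fintype V₀] (F : SimpleGraph V₀)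
    [DecidableRel F.Adj] : Type :=
  V₀ ⊕ ((Σ v : V₀, Fin (d - F.degree v)) × List (Fin (d - 1)))

/-- The infinite tree extension `T^∞ G₀`. -/
def TInf (d : ℕ) (V₀ : Type) [Fintype V₀] (F : SimpleGraph V₀) [DecidableRel F.Adj] :
    SimpleGraph (TInfVert d V₀ F) where
  Adj x y :=
    match x, y with
    | Sum.inl u, Sum.inl v => F.Adj u v
    | Sum.inl u, Sum.inr (t, l) => t.1 = u ∧ l = []
    | Sum.inr (t, l), Sum.inl u => t.1 = u ∧ l = []
    | Sum.inr (t, l), Sum.inr (s, m) => t = s ∧ ∃ a, m = l ++ [a] ∨ l = m ++ [a]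
  symm := by
    constructor
    rintro (u | ⟨t, l⟩) (v | ⟨s, m⟩) h
    · exact F.symm.symm _ _ h
    · exact h
    · exact h
    · exact ⟨h.1.symm, h.2.imp fun a ha => ha.symm⟩
  loopless := by
    constructor
    rintro (u | ⟨t, l⟩) h
    · exact F.loopless.irrefl u h
    · obtain ⟨a, ha | ha⟩ := h.2 <;> simpa using congrArg List.length ha

/-- Distance of a vertex of `T^∞ G₀` from `V₀`. -/
def TIlevel (d : ℕ) (V₀ : Type) [Fintype V₀] (F : SimpleGraph V₀) [DecidableRel F.Adj] :
    TInfVert d V₀ F → ℕ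
  | Sum.inl _ => 0
  | Sum.inr (_, l) => l.length + 1

/-- Directed edges of a graph. -/
abbrev DirEdge {V : Type*} (G : SimpleGraph V) : Type _ := {p : V × V // G.Adj p.1 p.2}

section TreeDecay

variable {α : Type*} [Fintype α] {θ : ℝ} {ψ : List α → ℝ}

theorem pow_mul_eq_sum_append_ofFn (heig : ∀ l, θ * ψ l = ∑ a, ψ (l ++ [a])) (k : ℕ)
    (l : List α) : θ ^ k * ψ l = ∑ w : Fin k → α, ψ (l ++ List.ofFn w) := by
  induction k generalizing l with
  | zero => simp
  | succ k ih =>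
    rw [pow_succ, mul_assoc, heig, Finset.mul_sum,
      ← (Fin.consEquiv fun _ => α).sum_comp, Fintype.sum_prod_type]
    simp [ih, List.ofFn_succ]

theorem sum_sq_append_ofFn_le_tsum (hsq : Summable fun l => ψ l ^ 2) (k : ℕ) (l : List α) :
    ∑ w : Fin k → α, ψ (l ++ List.ofFn w) ^ 2 ≤ ∑' l, ψ l ^ 2 := by
  rw [← tsum_fintype (L := SummationFilter.unconditional _)]
  exact tsum_comp_le_tsum_of_inj hsq (fun _ => sq_nonneg _)
    ((List.append_right_injective l).comp List.ofFn_injective)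

theorem eq_zero_of_summable_sq_of_mul_eq_sum_append (hθ : (Fintype.card α : ℝ) < θ ^ 2)
    (hsq : Summable fun l => ψ l ^ 2) (heig : ∀ l, θ * ψ l = ∑ a, ψ (l ++ [a])) (l : List α) :
    ψ l = 0 := by
  set S := ∑' l, ψ l ^ 2
  set r := (Fintype.card α : ℝ) / θ ^ 2
  have hθpos : 0 < θ ^ 2 := (Nat.cast_nonneg _).trans_lt hθ
  have hbound (k : ℕ) : ψ l ^ 2 ≤ S * r ^ k := by
    have key : (θ ^ 2) ^ k * ψ l ^ 2 ≤ (Fintype.card α : ℝ) ^ k * S :=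
      calc (θ ^ 2) ^ k * ψ l ^ 2 = (∑ w : Fin k → α, ψ (l ++ List.ofFn w)) ^ 2 := by
            rw [← pow_mul_eq_sum_append_ofFn heig]; ring
        _ ≤ Fintype.card (Fin k → α) * ∑ w : Fin k → α, ψ (l ++ List.ofFn w) ^ 2 :=
            sq_sum_le_card_mul_sum_sq
        _ ≤ (Fintype.card α : ℝ) ^ k * S := by
            rw [Fintype.card_fun, Fintype.card_fin, Nat.cast_pow]
            gcongr
            exact sum_sq_append_ofFn_le_tsum hsq k l
    rw [div_pow, mul_div_assoc', le_div_iff₀ (pow_pos hθpos k)]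
    linarith
  have hr : Filter.Tendsto (fun k => S * r ^ k) Filter.atTop (nhds 0) := by
    simpa using (tendsto_pow_atTop_nhds_zero_of_lt_one (by positivity)
      ((div_lt_one hθpos).mpr hθ)).const_mul S
  exact pow_eq_zero_iff two_ne_zero |>.mp <|
    le_antisymm (ge_of_tendsto' hr hbound) (sq_nonneg _)

end TreeDecay

theorem tsum_subtype_and_eq {β : Type*} {f : β → ℝ} {p q : β → Prop}
    (h : ∀ x, q x → f x ≠ 0 → p x) :
    ∑' x : {x // p x ∧ q x}, f x = ∑' x : {x // q x}, f x := by
  refine (tsum_subtype {x | p x ∧ q x} f).trans (.trans ?_ (tsum_subtype {x | q x} f).symm)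
  congr 1
  ext x
  by_cases hq : q x <;> by_cases hf : f x = 0 <;> simp_all [Set.indicator]

theorem natCast_sub_one_lt_sq_of_sqrt_lt {d : ℕ} {θ : ℝ} (hθ : √((d : ℝ) - 1) < |θ|) :
    ((d - 1 : ℕ) : ℝ) < θ ^ 2 := by
  have h := (Real.sqrt_lt' ((Real.sqrt_nonneg _).trans_lt hθ)).1 hθ
  rw [sq_abs] at h
  rcases d with _ | d
  · simpa [sq_pos_iff] using (Real.sqrt_nonneg _).trans_lt hθ
  · simpa using h

/-- The edges `e` with `B f e = 1`, so that `(B φ) f = ∑' e : nbPred G f, φ e`. -/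
abbrev nbPred {V : Type*} (G : SimpleGraph V) (f : DirEdge G) : Type _ :=
  {e : DirEdge G // e.1.2 = f.1.1 ∧ e.1 ≠ (f.1.2, f.1.1)}

theorem eq_zero_of_forall_nbPred_eq_zero {V : Type*} {G : SimpleGraph V} {φ : DirEdge G → ℝ}
    {θ : ℝ} (hθ : θ ≠ 0) {f : DirEdge G} (heig : ∑' e : nbPred G f, φ e = θ * φ f)
    (h : ∀ e : nbPred G f, φ e = 0) : φ f = 0 := by
  simp only [h, tsum_zero] at heig
  exact (mul_eq_zero.mp heig.symm).resolve_left hθ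

section Levels

variable {V : Type*} {G : SimpleGraph V} {φ : DirEdge G → ℝ} {θ : ℝ}

theorem eq_zero_of_eq_zero_on_level_zero (level : V → ℕ)
    (hlevel : ∀ x y, G.Adj x y → level x = level y → level x = 0) (hθ : θ ≠ 0)
    (heig : ∀ f, ∑' e : nbPred G f, φ e = θ * φ f)
    (hdown : ∀ f : DirEdge G, level f.1.2 < level f.1.1 → φ f = 0)
    (hbase : ∀ f : DirEdge G, level f.1.1 = 0 → level f.1.2 = 0 → φ f = 0) (f : DirEdge G) :
    φ f = 0 := by
  induction hn : level f.1.2 using Nat.strong_induction_on generalizing f with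
  | _ n ih =>
    rcases lt_trichotomy (level f.1.1) (level f.1.2) with hlt | heq | hgt
    · refine eq_zero_of_forall_nbPred_eq_zero hθ (heig f) fun e => ?_
      exact ih _ (by rw [← hn, e.2.1]; exact hlt) e rfl
    · have h0 := hlevel _ _ f.2 heq
      exact hbase f h0 (heq ▸ h0)
    · exact hdown f hgt

end Levels

namespace TInf

variable {d : ℕ} {V₀ : Type} [Fintype V₀] {G₀ : SimpleGraph V₀} [DecidableRel G₀.Adj]
  (t : Σ v : V₀, Fin (d - G₀.degree v))

def parent (l : List (Fin (d - 1))) : TInfVert d V₀ G₀ :=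
  if l = [] then Sum.inl t.1 else Sum.inr (t, l.dropLast)

@[simp] theorem parent_nil : parent t [] = Sum.inl t.1 := rfl

@[simp] theorem parent_append_singleton (l : List (Fin (d - 1))) (a : Fin (d - 1)) :
    parent t (l ++ [a]) = Sum.inr (t, l) := by
  simp [parent]

theorem adj_parent (l : List (Fin (d - 1))) :
    (TInf d V₀ G₀).Adj (Sum.inr (t, l)) (parent t l) := by
  rcases List.eq_nil_or_concat l with rfl | ⟨m, a, rfl⟩
  · exact ⟨rfl, rfl⟩
  · rw [List.concat_eq_append, parent_append_singleton]
    exact ⟨rfl, a, Or.inr rfl⟩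

theorem eq_parent_or_child_of_adj {y : TInfVert d V₀ G₀} {l : List (Fin (d - 1))}
    (h : (TInf d V₀ G₀).Adj y (Sum.inr (t, l))) :
    y = parent t l ∨ ∃ a, y = Sum.inr (t, l ++ [a]) := by
  rcases y with u | ⟨s, m⟩
  · obtain ⟨rfl, rfl⟩ : t.1 = u ∧ l = [] := h
    exact Or.inl rfl
  · obtain ⟨rfl, a, rfl | rfl⟩ : s = t ∧ ∃ a, l = m ++ [a] ∨ m = l ++ [a] := h
    · exact Or.inl (parent_append_singleton _ m a).symm
    · exact Or.inr ⟨a, rfl⟩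

theorem child_ne_parent (l : List (Fin (d - 1))) (a : Fin (d - 1)) :
    (Sum.inr (t, l ++ [a]) : TInfVert d V₀ G₀) ≠ parent t l := by
  rcases List.eq_nil_or_concat l with rfl | ⟨m, b, rfl⟩
  · simp
  · rw [List.concat_eq_append, parent_append_singleton]
    simp

def towardEdge (l : List (Fin (d - 1))) : DirEdge (TInf d V₀ G₀) :=
  ⟨(Sum.inr (t, l), parent t l), adj_parent t l⟩

theorem towardEdge_injective : Function.Injective (towardEdge t) := fun l₁ l₂ h => by
  simpa [towardEdge] using congrArg (fun e => e.1.1) h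

def nbPredTowardEdgeEquiv (l : List (Fin (d - 1))) :
    Fin (d - 1) ≃ nbPred (TInf d V₀ G₀) (towardEdge t l) :=
  Equiv.ofBijective
    (fun a => ⟨towardEdge t (l ++ [a]), parent_append_singleton t l a,
      fun h => child_ne_parent t l a (congrArg Prod.fst h)⟩)
    ⟨fun a b hab => by
      simpa using towardEdge_injective t (congrArg Subtype.val hab),
    fun ⟨e, he, hne⟩ => by
      rcases eq_parent_or_child_of_adj t (he ▸ e.2) with hp | ⟨a, ha⟩
      · exact absurd (Prod.ext hp he) hne
      · exact ⟨a, Subtype.ext <| Subtype.ext <| Prod.ext ha.symm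
          ((parent_append_singleton t l a).trans he.symm)⟩⟩

theorem tsum_nbPred_towardEdge (φ : DirEdge (TInf d V₀ G₀) → ℝ) (l : List (Fin (d - 1))) :
    ∑' e : nbPred (TInf d V₀ G₀) (towardEdge t l), φ e = ∑ a, φ (towardEdge t (l ++ [a])) := by
  rw [← (nbPredTowardEdgeEquiv t l).tsum_eq, tsum_fintype]
  rfl

theorem isLeft_iff_TIlevel_eq_zero {x : TInfVert d V₀ G₀} :
    x.isLeft = true ↔ TIlevel d V₀ G₀ x = 0 := by
  rcases x with u | ⟨s, m⟩ <;> simp [TIlevel]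

theorem TIlevel_eq_zero_of_adj_of_TIlevel_eq {x y : TInfVert d V₀ G₀}
    (h : (TInf d V₀ G₀).Adj x y) (hxy : TIlevel d V₀ G₀ x = TIlevel d V₀ G₀ y) :
    TIlevel d V₀ G₀ x = 0 := by
  rcases x with u | ⟨t, l⟩
  · rfl
  rcases y with v | ⟨s, m⟩
  · simp [TIlevel] at hxy
  · obtain ⟨-, a, rfl | rfl⟩ : t = s ∧ ∃ a, m = l ++ [a] ∨ l = m ++ [a] := h <;>
      simp [TIlevel] at hxy

theorem exists_eq_towardEdge_of_TIlevel_lt (f : DirEdge (TInf d V₀ G₀))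
    (h : TIlevel d V₀ G₀ f.1.2 < TIlevel d V₀ G₀ f.1.1) :
    ∃ t l, f = towardEdge t l := by
  obtain ⟨⟨x | ⟨t, l⟩, y⟩, hadj⟩ := f
  · simp [TIlevel] at h
  rcases y with u | ⟨s, m⟩
  · obtain ⟨rfl, rfl⟩ : t.1 = u ∧ l = [] := hadj
    exact ⟨t, [], rfl⟩
  · obtain ⟨rfl, a, rfl | rfl⟩ : t = s ∧ ∃ a, m = l ++ [a] ∨ l = m ++ [a] := hadj
    · simp [TIlevel] at h
    · exact ⟨t, m ++ [a], Subtype.ext (by simp [towardEdge])⟩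

end TInf

theorem statement4_general (d : ℕ) (V₀ : Type) [Fintype V₀]
    (G₀ : SimpleGraph V₀) [DecidableRel G₀.Adj]
    (θ : ℝ) (hθ : Real.sqrt ((d : ℝ) - 1) < |θ|)
    (φ : DirEdge (TInf d V₀ G₀) → ℝ)
    (hsq : Summable fun e => φ e ^ 2) (hnorm : ∑' e, φ e ^ 2 = 1)
    (heig : ∀ f : DirEdge (TInf d V₀ G₀),
      (∑' e : {e : DirEdge (TInf d V₀ G₀) //
          e.1.2 = f.1.1 ∧ e.1 ≠ (f.1.2, f.1.1)}, φ (e : DirEdge (TInf d V₀ G₀)))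
        = θ * φ f) :
    (∀ f : DirEdge (TInf d V₀ G₀),
      TIlevel d V₀ G₀ f.1.2 < TIlevel d V₀ G₀ f.1.1 → φ f = 0) ∧
    (∃ f : DirEdge (TInf d V₀ G₀),
      ((f.1.1).isLeft = true ∧ (f.1.2).isLeft = true) ∧ φ f ≠ 0) ∧
    (∀ f : DirEdge (TInf d V₀ G₀), (f.1.1).isLeft = true → (f.1.2).isLeft = true →
      (∑' e : {e : DirEdge (TInf d V₀ G₀) //
          ((e.1.1).isLeft = true ∧ (e.1.2).isLeft = true) ∧
          e.1.2 = f.1.1 ∧ e.1 ≠ (f.1.2, f.1.1)}, φ (e : DirEdge (TInf d V₀ G₀)))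
        = θ * φ f) := by
  have hθ' : (Fintype.card (Fin (d - 1)) : ℝ) < θ ^ 2 := by
    simpa using natCast_sub_one_lt_sq_of_sqrt_lt hθ
  have hθ0 : θ ≠ 0 := by
    rintro rfl
    linarith [Nat.cast_nonneg (α := ℝ) (Fintype.card (Fin (d - 1)))]
  have htoward (f : DirEdge (TInf d V₀ G₀))
      (hf : TIlevel d V₀ G₀ f.1.2 < TIlevel d V₀ G₀ f.1.1) : φ f = 0 := by
    obtain ⟨t, l, rfl⟩ := TInf.exists_eq_towardEdge_of_TIlevel_lt f hf
    refine eq_zero_of_summable_sq_of_mul_eq_sum_append hθ'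
      (hsq.comp_injective (TInf.towardEdge_injective t)) (fun l => ?_) l
    rw [← heig, TInf.tsum_nbPred_towardEdge]
  refine ⟨htoward, ?_, fun f hf _ => ?_⟩
  · by_contra! hbase
    have hφ : φ = 0 := funext <| eq_zero_of_eq_zero_on_level_zero (TIlevel d V₀ G₀)
      (fun _ _ => TInf.TIlevel_eq_zero_of_adj_of_TIlevel_eq) hθ0 heig htoward
      fun f h₁ h₂ => hbase f ⟨TInf.isLeft_iff_TIlevel_eq_zero.2 h₁,
        TInf.isLeft_iff_TIlevel_eq_zero.2 h₂⟩
    simp [hφ] at hnorm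
  · rw [← heig f]
    refine tsum_subtype_and_eq fun e he hne => ?_
    have hleft : e.1.2.isLeft = true := he.1 ▸ hf
    refine ⟨by_contra fun h => hne (htoward e ?_), hleft⟩
    rw [TInf.isLeft_iff_TIlevel_eq_zero.1 hleft]
    exact Nat.pos_of_ne_zero (mt TInf.isLeft_iff_TIlevel_eq_zero.2 h)

/-- If `θ` with `|θ| > √(d-1)` is an ℓ²-eigenvalue of the nonbacktracking operator `B` of
`G = T^∞ G₀` with unit eigenvector `φ`, then `φ` vanishes on every directed edge pointing
towards `V₀`, and `θ` is an eigenvalue of the restriction `B₀` of `B` to the directed edges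
supported on `V₀`, with eigenvector the (nonzero) restriction of `φ`. -/
theorem statement4 (d : ℕ) (hd : 3 ≤ d) (V₀ : Type) [Fintype V₀]
    (G₀ : SimpleGraph V₀) [DecidableRel G₀.Adj] (hdeg : ∀ v, G₀.degree v ≤ d)
    (θ : ℝ) (hθ : Real.sqrt ((d : ℝ) - 1) < |θ|)
    (φ : DirEdge (TInf d V₀ G₀) → ℝ)
    (hsq : Summable fun e => φ e ^ 2) (hnorm : ∑' e, φ e ^ 2 = 1)
    (heig : ∀ f : DirEdge (TInf d V₀ G₀),
      (∑' e : {e : DirEdge (TInf d V₀ G₀) //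
          e.1.2 = f.1.1 ∧ e.1 ≠ (f.1.2, f.1.1)}, φ (e : DirEdge (TInf d V₀ G₀)))
        = θ * φ f) :
    (∀ f : DirEdge (TInf d V₀ G₀),
      TIlevel d V₀ G₀ f.1.2 < TIlevel d V₀ G₀ f.1.1 → φ f = 0) ∧
    (∃ f : DirEdge (TInf d V₀ G₀),
      ((f.1.1).isLeft = true ∧ (f.1.2).isLeft = true) ∧ φ f ≠ 0) ∧
    (∀ f : DirEdge (TInf d V₀ G₀), (f.1.1).isLeft = true → (f.1.2).isLeft = true →
      (∑' e : {e : DirEdge (TInf d V₀ G₀) //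
          ((e.1.1).isLeft = true ∧ (e.1.2).isLeft = true) ∧
          e.1.2 = f.1.1 ∧ e.1 ≠ (f.1.2, f.1.1)}, φ (e : DirEdge (TInf d V₀ G₀)))
        = θ * φ f) :=
  statement4_general d V₀ G₀ θ hθ φ hsq hnorm heig

end
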